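/- Let φ(x,y) = (y, x + f(y)), where f ∈ K[z] is monic of degree d ≥ 2 and K is a field with a non-archimedean absolute value |·|, extended to the algebraic closure. Set ρ(f) = max over pairs of roots ζ₁, ζ₂ of f of max(|ζ₁ − ζ₂|, 1), and let Δ_f = {(ζ₁, ζ₂) : f(ζ₁) = f(ζ₂) = 0}. If Q' ∈ Δ_f and P = (x,y) satisfies ‖P − Q'‖ > ρ(f), then P is not in the filled Julia set; more precisely, either ‖φ^N(P) − Q'‖ = ‖P − Q'‖^{d^N} for all N ≥ 1 (so ‖φ^N(P)‖ → ∞), or ‖φ^{−N}(P) − Q'‖ = ‖P − Q'‖^{d^N} for all N ≥ 1. -/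

import Mathlib

open Polynomial

/-!
Outside the disk of radius `ρ(f)` around any root, every factor `w - ζᵢ` of the monic split
polynomial `f` has the same absolute value as `w - ζ`, so `|f(w)| = |w - ζ|^d`. If the second
coordinate of `P - Q'` dominates, one step of `φ` raises it to the `d`-th power, and the new
second coordinate `x + f(y) - ζ` is dominated by `f(y)` because `d ≥ 2` makes `|f(y)|` strictly
larger than everything else; the old second coordinate becomes the new first one, so the
situation reproduces itself. If the first coordinate dominates, the same argument applies to
`φ⁻¹`, which is conjugate by the swap `(x, y) ↦ (y, x)` to the Hénon-type map built from `-f`.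
-/

theorem Polynomial.Splits.abv_eval_eq_pow_natDegree {R : Type*} [CommRing R] [IsDomain R]
    {v : AbsoluteValue R ℝ} (hna : IsNonarchimedean v) {f : R[X]} (hf : f.Splits)
    (hm : f.Monic) {c w : R} (hroots : ∀ a ∈ f.roots, v (c - a) < v (w - c)) :
    v (f.eval w) = v (w - c) ^ f.natDegree := by
  have hfactor : ∀ a ∈ f.roots, (v ∘ (w - ·)) a = v (w - c) := fun a ha => by
    rw [Function.comp_apply, ← sub_add_sub_cancel w c a]
    exact hna.add_eq_left_of_lt (hroots a ha)
  rw [hf.eval_eq_prod_roots_of_monic hm, map_multiset_prod, Multiset.map_map,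
    Multiset.map_congr rfl hfactor, Multiset.map_const', Multiset.prod_replicate,
    hf.natDegree_eq_card_roots]

section HenonMap

variable {R : Type*} [Ring R]

def henonMap (g : R → R) (Q : R × R) : R × R := (Q.2, Q.1 + g Q.2)

variable {v : AbsoluteValue R ℝ} {g : R → R} {a b : R} {ρ : ℝ} {d : ℕ}

theorem abv_henonMap_step (hna : IsNonarchimedean v) (hd : 2 ≤ d) (hρ : 1 ≤ ρ)
    (hab : v (a - b) ≤ ρ) (hg : ∀ w, ρ < v (w - b) → v (g w) = v (w - b) ^ d)
    {Q : R × R} (hQ2 : ρ < v (Q.2 - b)) (hQ1 : v (Q.1 - a) ≤ v (Q.2 - b)) :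
    v ((henonMap g Q).2 - b) = v (Q.2 - b) ^ d ∧
      v ((henonMap g Q).1 - a) ≤ v ((henonMap g Q).2 - b) := by
  set s := v (Q.2 - b)
  have hs : s < s ^ d := lt_self_pow₀ (hρ.trans_lt hQ2) (by omega)
  have hQ1b : v (Q.1 - b) ≤ s := by
    rw [← sub_add_sub_cancel Q.1 a b]
    exact (hna _ _).trans (max_le hQ1 (hab.trans hQ2.le))
  have hQ2a : v (Q.2 - a) ≤ s := by
    rw [← sub_add_sub_cancel Q.2 b a]
    exact (hna _ _).trans (max_le le_rfl ((v.map_sub b a).trans_le (hab.trans hQ2.le)))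
  have hnext : v (Q.1 + g Q.2 - b) = s ^ d := by
    rw [add_sub_right_comm, add_comm, ← hg Q.2 hQ2]
    exact hna.add_eq_left_of_lt (hQ1b.trans_lt (hg Q.2 hQ2 ▸ hs))
  exact ⟨hnext, hnext ▸ hQ2a.trans hs.le⟩

theorem abv_henonMap_iterate (hna : IsNonarchimedean v) (hd : 2 ≤ d) (hρ : 1 ≤ ρ)
    (hab : v (a - b) ≤ ρ) (hg : ∀ w, ρ < v (w - b) → v (g w) = v (w - b) ^ d)
    {Q : R × R} (hQ2 : ρ < v (Q.2 - b)) (hQ1 : v (Q.1 - a) ≤ v (Q.2 - b)) (N : ℕ) :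
    v (((henonMap g)^[N] Q).2 - b) = v (Q.2 - b) ^ d ^ N ∧
      v (((henonMap g)^[N] Q).1 - a) ≤ v (((henonMap g)^[N] Q).2 - b) := by
  induction N with
  | zero => exact ⟨(pow_one _).symm, hQ1⟩
  | succ N ih =>
    have hgrow : v (Q.2 - b) ≤ v (Q.2 - b) ^ d ^ N :=
      le_self_pow₀ (hρ.trans hQ2.le) (pow_ne_zero N (by omega))
    obtain ⟨hnext, hle⟩ := abv_henonMap_step hna hd hρ hab hg
      (ih.1 ▸ hQ2.trans_le hgrow) ih.2
    rw [Function.iterate_succ_apply']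
    exact ⟨by rw [hnext, ih.1, ← pow_mul, ← pow_succ], hle⟩

theorem max_abv_henonMap_iterate (hna : IsNonarchimedean v) (hd : 2 ≤ d) (hρ : 1 ≤ ρ)
    (hab : v (a - b) ≤ ρ) (hg : ∀ w, ρ < v (w - b) → v (g w) = v (w - b) ^ d)
    {Q : R × R} (hQ2 : ρ < v (Q.2 - b)) (hQ1 : v (Q.1 - a) ≤ v (Q.2 - b)) (N : ℕ) :
    max (v (((henonMap g)^[N] Q).1 - a)) (v (((henonMap g)^[N] Q).2 - b)) =
      max (v (Q.1 - a)) (v (Q.2 - b)) ^ d ^ N := by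
  obtain ⟨hpow, hle⟩ := abv_henonMap_iterate hna hd hρ hab hg hQ2 hQ1 N
  rw [max_eq_right hle, max_eq_right hQ1, hpow]

end HenonMap

theorem stmt8_general {K : Type*} [Field K] (v : AbsoluteValue K ℝ)
    (hna : IsNonarchimedean v) (d : ℕ) (hd : 2 ≤ d)
    (f : K[X]) (hmonic : f.Monic) (hdeg : f.natDegree = d)
    (hsplit : f.Splits)
    (ρ : ℝ) (hρ1 : 1 ≤ ρ)
    (hρ2 : ∀ ζ₁ ζ₂ : K, f.eval ζ₁ = 0 → f.eval ζ₂ = 0 → v (ζ₁ - ζ₂) ≤ ρ)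
    (φ φi : K × K → K × K)
    (hφ : ∀ P, φ P = (P.2, P.1 + f.eval P.2))
    (hφi : ∀ P, φi P = (P.2 - f.eval P.1, P.1))
    (ζ' ζ : K) (hz1 : f.eval ζ' = 0) (hz2 : f.eval ζ = 0)
    (P : K × K) (hfar : max (v (P.1 - ζ')) (v (P.2 - ζ)) > ρ) :
    (∀ N : ℕ, 1 ≤ N →
      max (v ((φ^[N] P).1 - ζ')) (v ((φ^[N] P).2 - ζ)) =
        (max (v (P.1 - ζ')) (v (P.2 - ζ))) ^ (d ^ N)) ∨
    (∀ N : ℕ, 1 ≤ N →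
      max (v ((φi^[N] P).1 - ζ')) (v ((φi^[N] P).2 - ζ)) =
        (max (v (P.1 - ζ')) (v (P.2 - ζ))) ^ (d ^ N)) := by
  have hf : ∀ c, f.eval c = 0 → ∀ w, ρ < v (w - c) → v (f.eval w) = v (w - c) ^ d :=
    fun c hc w hw => hdeg ▸ hsplit.abv_eval_eq_pow_natDegree hna hmonic fun a ha =>
      (hρ2 c a hc ((mem_roots hmonic.ne_zero).mp ha)).trans_lt hw
  have hφ_eq : φ = henonMap f.eval := funext hφ
  have hconj : Function.Semiconj Prod.swap (henonMap (-f.eval ·)) φi := fun Q => by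
    simp [hφi, henonMap, sub_eq_add_neg]
  have hφi_eq : ∀ N, φi^[N] P = ((henonMap (-f.eval ·))^[N] P.swap).swap := fun N => by
    rw [hconj.iterate_right N, Prod.swap_swap]
  rcases le_or_gt (v (P.1 - ζ')) (v (P.2 - ζ)) with hle | hlt
  · left
    intro N _
    rw [hφ_eq]
    exact max_abv_henonMap_iterate hna hd hρ1 (hρ2 _ _ hz1 hz2) (hf ζ hz2)
      (max_eq_right hle ▸ hfar) hle N
  · right
    intro N _
    rw [hφi_eq, max_comm, max_comm (v (P.1 - ζ'))]
    exact max_abv_henonMap_iterate hna hd hρ1 (hρ2 _ _ hz2 hz1)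
      (fun w hw => (v.map_neg _).trans (hf ζ' hz1 w hw)) (max_eq_left hlt.le ▸ hfar) hlt.le N

/-- if `P` lies outside the polydisk of radius `ρ(f)` around a point
`Q' = (ζ',ζ)` of `Δ_f`, then either the forward or the backward iterates of `P`
under the Hénon map `φ(x,y) = (y, x+f(y))` escape, with
`‖φ^{±N}(P) − Q'‖ = ‖P − Q'‖^{d^N}`. -/
theorem stmt8 {K : Type*} [Field K] (v : AbsoluteValue K ℝ)
    (hna : IsNonarchimedean v) (d : ℕ) (hd : 2 ≤ d)
    (f : K[X]) (hmonic : f.Monic) (hdeg : f.natDegree = d)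
    (hsplit : f.Splits)
    (ρ : ℝ) (hρ1 : 1 ≤ ρ)
    (hρ2 : ∀ ζ₁ ζ₂ : K, f.eval ζ₁ = 0 → f.eval ζ₂ = 0 → v (ζ₁ - ζ₂) ≤ ρ)
    (hρ3 : ρ = 1 ∨ ∃ ζ₁ ζ₂ : K, f.eval ζ₁ = 0 ∧ f.eval ζ₂ = 0 ∧ v (ζ₁ - ζ₂) = ρ)
    (φ φi : K × K → K × K)
    (hφ : ∀ P, φ P = (P.2, P.1 + f.eval P.2))
    (hφi : ∀ P, φi P = (P.2 - f.eval P.1, P.1))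
    (ζ' ζ : K) (hz1 : f.eval ζ' = 0) (hz2 : f.eval ζ = 0)
    (P : K × K) (hfar : max (v (P.1 - ζ')) (v (P.2 - ζ)) > ρ) :
    (∀ N : ℕ, 1 ≤ N →
      max (v ((φ^[N] P).1 - ζ')) (v ((φ^[N] P).2 - ζ)) =
        (max (v (P.1 - ζ')) (v (P.2 - ζ))) ^ (d ^ N)) ∨
    (∀ N : ℕ, 1 ≤ N →
      max (v ((φi^[N] P).1 - ζ')) (v ((φi^[N] P).2 - ζ)) =
        (max (v (P.1 - ζ')) (v (P.2 - ζ))) ^ (d ^ N)) :=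
  stmt8_general v hna d hd f hmonic hdeg hsplit ρ hρ1 hρ2 φ φi hφ hφi ζ' ζ hz1 hz2 P hfar
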